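/- arXiv:2101.01079 — 3 statements merged into one kernel-verified Lean document; each statement's English description precedes it below -/
import Mathlib

section
/- Let 1 < α, β < 2 and let λ satisfy (α + max(α,β))/2 − 1 ≤ λ ≤ 1. Then the maximum entry of λU + V equals (λ+1)(2−α), attained at position (1,1). -/
theorem general_sigma_lambda (α β l : ℝ) (hα : 1 < α) (hα2 : α < 2)
    (hβ : 1 < β) (hβ2 : β < 2)
    (hl1 : (α + max α β) / 2 - 1 ≤ l) (hl2 : l ≤ 1) :
    let M : Matrix (Fin 3) (Fin 3) ℝ :=
      !![(l + 1) * (2 - α), -l * (α - 1) + 1, -l * α + β;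
         l - α + 1, 0, -l + β - 1;
         l * β - α, l * (β - 1) - 1, -(l + 1) * (2 - β)]
    (∀ i j : Fin 3, M i j ≤ (l + 1) * (2 - α)) ∧ M 0 0 = (l + 1) * (2 - α) := by
  intro M
  have ha : α ≤ max α β := le_max_left α β
  have hb : β ≤ max α β := le_max_right α β
  have hl3 : α + β ≤ 2 * l + 2 := by
    have := add_le_add_left hb α
    linarith
  have hl4 : α ≤ l + 1 := by
    have := add_le_add_left ha α
    linarith
  refine ⟨fun i j => ?_, rfl⟩
  fin_cases i <;> fin_cases j <;> simp [M, Matrix.cons_val_one] <;>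
    nlinarith [mul_pos (sub_pos.mpr hα) (sub_pos.mpr hβ), sq_nonneg (α - β),
      sq_nonneg (α + β - 2), sq_nonneg (l - 1), mul_nonneg (sub_nonneg.mpr hl2) (sub_pos.mpr hα).le,
      mul_nonneg (sub_nonneg.mpr hl2) (sub_pos.mpr hβ).le]
end

section
/- Let 1 < α ≤ β < 2 and consider the threat point (−(2−β), −(2−β)). Along the line v = −(2/(α+β−2))u + (2−α)(α+β)/(α+β−2) for u ∈ [2−α, β], the Nash product (u + 2 − β)(v + 2 − β) attains its maximum at u = 2−α, with maximal value (4−α−β)². -/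
/-!
On the line through `(2 - α, 2 - α)` the Nash product is a product of two affine functions of `u`,
the second one with negative slope `-2 / (α + β - 2)`, so it is a concave quadratic. Its derivative
at `u = 2 - α` equals `-(4 - α - β)² / (α + β - 2) ≤ 0`, hence it is nonincreasing to the right of
`2 - α`, where its value is `(4 - α - β)²`.
-/

theorem add_mul_affine_le_of_deriv_nonpos {m c d a u : ℝ} (hm : m ≤ 0) (hau : a ≤ u)
    (hderiv : m * (2 * a + c) + d ≤ 0) : (u + c) * (m * u + d) ≤ (a + c) * (m * a + d) := by
  have hdiff : (u + c) * (m * u + d) - (a + c) * (m * a + d)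
      = (u - a) * (m * (u - a) + (m * (2 * a + c) + d)) := by ring
  rw [← sub_nonpos, hdiff]
  exact mul_nonpos_of_nonneg_of_nonpos (sub_nonneg.2 hau)
    (add_nonpos (mul_nonpos_of_nonpos_of_nonneg hm (sub_nonneg.2 hau)) hderiv)

theorem nash_product_P2_case1_general (α β : ℝ) (hα : 1 < α) (hαβ : α ≤ β) :
    let v : ℝ → ℝ := fun u =>
      -(2 / (α + β - 2)) * u + (2 - α) * (α + β) / (α + β - 2)
    let g : ℝ → ℝ := fun u => (u + 2 - β) * (v u + 2 - β)
    (∀ u ∈ Set.Icc (2 - α) β, g u ≤ g (2 - α)) ∧ g (2 - α) = (4 - α - β) ^ 2 := by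
  intro v g
  have hs : 0 < α + β - 2 := by linarith
  have hv : v (2 - α) = 2 - α := by
    simp only [v]
    field_simp
    ring
  have hderiv : -(2 / (α + β - 2)) * (2 * (2 - α) + (2 - β))
      + ((2 - α) * (α + β) / (α + β - 2) + (2 - β)) = -((4 - α - β) ^ 2 / (α + β - 2)) := by
    field_simp
    ring
  refine ⟨fun u hu => ?_, by simp only [g]; rw [hv]; ring⟩
  have hle := add_mul_affine_le_of_deriv_nonpos (c := 2 - β)
    (d := (2 - α) * (α + β) / (α + β - 2) + (2 - β))
    (neg_nonpos.2 (by positivity)) hu.1 (hderiv ▸ neg_nonpos.2 (by positivity))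
  convert hle using 1 <;> simp only [g, v] <;> ring

theorem nash_product_P2_case1 (α β : ℝ) (hα : 1 < α) (hαβ : α ≤ β) (hβ : β < 2) :
    let v : ℝ → ℝ := fun u =>
      -(2 / (α + β - 2)) * u + (2 - α) * (α + β) / (α + β - 2)
    let g : ℝ → ℝ := fun u => (u + 2 - β) * (v u + 2 - β)
    (∀ u ∈ Set.Icc (2 - α) β, g u ≤ g (2 - α)) ∧ g (2 - α) = (4 - α - β) ^ 2 :=
  nash_product_P2_case1_general α β hα hαβ
end

section
/- Let 1 < β < α < 2. Along the line v = −(β−1)u + α + β − αβ for u ∈ [−α, −(α−1)], the Nash product (u + 2 − β)(v + 2 − β) with threat point (−(2−β), −(2−β)) attains its maximum at u = −(α−1), and this value is at most (4−α−β)². -/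
theorem nash_product_outer_segment (α β : ℝ) (hβ : 1 < β) (hβα : β < α) (hα : α < 2) :
    let g : ℝ → ℝ := fun u =>
      (u + 2 - β) * ((-(β - 1) * u + α + β - α * β) + 2 - β)
    (∀ u ∈ Set.Icc (-α) (-(α - 1)), g u ≤ g (-(α - 1))) ∧
    g (-(α - 1)) ≤ (4 - α - β) ^ 2 := by
  intro g
  constructor
  · rintro u ⟨h1, h2⟩
    simp only [g]
    nlinarith [mul_nonneg (sub_nonneg.2 h1) (sub_nonneg.2 h2), sq_nonneg (u + α - 1), sq_nonneg (β - 1), mul_pos (sub_pos.2 hβ) (sub_pos.2 hβα)]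
  · simp only [g]
    nlinarith [sq_nonneg (α - β), sq_nonneg (α + β - 3), mul_pos (sub_pos.2 hβ) (sub_pos.2 hβα), sq_nonneg (α - 1), sq_nonneg (2 - α)]
end
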